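/- arXiv:2006.15917 — 2 statements merged into one kernel-verified Lean document; each statement's English description precedes it below -/
import Mathlib

section
/- If u : ℝ × ℝ → ℝ is smooth with u(t,x) ≠ 0, and â(t,x) = -∂x u / u, and u satisfies the heat equation ∂t u - (1/2) ∂xx u = 0, then â satisfies the viscous Burgers equation ∂t â + â ∂x â - (1/2) ∂xx â = 0. -/
/-- Partial derivative in the time (first) variable. -/
noncomputable def pt (f : ℝ × ℝ → ℝ) (p : ℝ × ℝ) : ℝ :=
  deriv (fun s => f (s, p.2)) p.1

/-- Partial derivative in the space (second) variable. -/
noncomputable def px (f : ℝ × ℝ → ℝ) (p : ℝ × ℝ) : ℝ :=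
  deriv (fun y => f (p.1, y)) p.2

lemma hasDerivAt_slice_x (f : ℝ × ℝ → ℝ) (hf : ContDiff ℝ (⊤ : ℕ∞) f) (p : ℝ × ℝ) :
    HasDerivAt (fun y => f (p.1, y)) (fderiv ℝ f p (0, 1)) p.2 := by
  have h := ((hf.differentiable (by simp) p).hasFDerivAt).comp_hasDerivAt p.2
    (HasDerivAt.prodMk (hasDerivAt_const p.2 p.1) (hasDerivAt_id p.2))
  exact h

lemma hasDerivAt_slice_t (f : ℝ × ℝ → ℝ) (hf : ContDiff ℝ (⊤ : ℕ∞) f) (p : ℝ × ℝ) :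
    HasDerivAt (fun s => f (s, p.2)) (fderiv ℝ f p (1, 0)) p.1 := by
  have h := ((hf.differentiable (by simp) p).hasFDerivAt).comp_hasDerivAt p.1
    (HasDerivAt.prodMk (hasDerivAt_id p.1) (hasDerivAt_const p.1 p.2))
  exact h

lemma px_eq_fderiv (f : ℝ × ℝ → ℝ) (hf : ContDiff ℝ (⊤ : ℕ∞) f) (p : ℝ × ℝ) :
    px f p = fderiv ℝ f p (0, 1) := (hasDerivAt_slice_x f hf p).deriv

lemma pt_eq_fderiv (f : ℝ × ℝ → ℝ) (hf : ContDiff ℝ (⊤ : ℕ∞) f) (p : ℝ × ℝ) :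
    pt f p = fderiv ℝ f p (1, 0) := (hasDerivAt_slice_t f hf p).deriv

lemma hasDerivAt_px (f : ℝ × ℝ → ℝ) (hf : ContDiff ℝ (⊤ : ℕ∞) f) (p : ℝ × ℝ) :
    HasDerivAt (fun y => f (p.1, y)) (px f p) p.2 := by
  rw [px_eq_fderiv f hf]; exact hasDerivAt_slice_x f hf p

lemma hasDerivAt_pt (f : ℝ × ℝ → ℝ) (hf : ContDiff ℝ (⊤ : ℕ∞) f) (p : ℝ × ℝ) :
    HasDerivAt (fun s => f (s, p.2)) (pt f p) p.1 := by
  rw [pt_eq_fderiv f hf]; exact hasDerivAt_slice_t f hf p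

lemma contDiff_px (f : ℝ × ℝ → ℝ) (hf : ContDiff ℝ (⊤ : ℕ∞) f) : ContDiff ℝ (⊤ : ℕ∞) (px f) := by
  have h : px f = fun p => fderiv ℝ f p (0, 1) := funext (px_eq_fderiv f hf)
  rw [h]
  exact (hf.fderiv_right (by simp)).clm_apply contDiff_const

lemma pt_px_comm (f : ℝ × ℝ → ℝ) (hf : ContDiff ℝ (⊤ : ℕ∞) f) (p : ℝ × ℝ) :
    pt (px f) p = px (pt f) p := by
  have hf' : ∀ q, HasFDerivAt f (fderiv ℝ f q) q :=
    fun q => (hf.differentiable (by simp) q).hasFDerivAt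
  have hf'' : HasFDerivAt (fderiv ℝ f) (fderiv ℝ (fderiv ℝ f) p) p :=
    (((hf.fderiv_right (m := (⊤ : ℕ∞)) (by simp)).differentiable (by simp)) p).hasFDerivAt
  have hsymm := second_derivative_symmetric hf' hf'' ((1:ℝ), (0:ℝ)) ((0:ℝ), (1:ℝ))
  have hx : HasFDerivAt (px f)
      ((ContinuousLinearMap.apply ℝ ℝ ((0:ℝ),(1:ℝ))).comp (fderiv ℝ (fderiv ℝ f) p)) p := by
    have h := (ContinuousLinearMap.apply ℝ ℝ ((0:ℝ),(1:ℝ))).hasFDerivAt.comp p hf''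
    have heq : px f = fun q => (ContinuousLinearMap.apply ℝ ℝ ((0:ℝ),(1:ℝ))) (fderiv ℝ f q) :=
      funext (px_eq_fderiv f hf)
    rw [heq]; exact h
  have ht : HasFDerivAt (pt f)
      ((ContinuousLinearMap.apply ℝ ℝ ((1:ℝ),(0:ℝ))).comp (fderiv ℝ (fderiv ℝ f) p)) p := by
    have h := (ContinuousLinearMap.apply ℝ ℝ ((1:ℝ),(0:ℝ))).hasFDerivAt.comp p hf''
    have heq : pt f = fun q => (ContinuousLinearMap.apply ℝ ℝ ((1:ℝ),(0:ℝ))) (fderiv ℝ f q) :=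
      funext (pt_eq_fderiv f hf)
    rw [heq]; exact h
  have h1 : pt (px f) p = fderiv ℝ (fderiv ℝ f) p (1, 0) (0, 1) :=
    by have h := hx.comp_hasDerivAt p.1 (HasDerivAt.prodMk (hasDerivAt_id p.1) (hasDerivAt_const p.1 p.2)); exact h.deriv
  have h2 : px (pt f) p = fderiv ℝ (fderiv ℝ f) p (0, 1) (1, 0) :=
    by have h := ht.comp_hasDerivAt p.2 (HasDerivAt.prodMk (hasDerivAt_const p.2 p.1) (hasDerivAt_id p.2)); exact h.deriv
  rw [h1, h2, hsymm]

/-- If `u` is smooth and nowhere zero, `â = -∂x u / u`, and `u` solves the heat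
equation `∂t u - (1/2) ∂xx u = 0`, then `â` solves the viscous Burgers equation
`∂t â + â ∂x â - (1/2) ∂xx â = 0`. -/
theorem viscous_burgers_of_heat
    (u : ℝ × ℝ → ℝ) (hu : ContDiff ℝ (⊤ : ℕ∞) u) (hne : ∀ p, u p ≠ 0)
    (aHat : ℝ × ℝ → ℝ) (ha : ∀ p, aHat p = -(px u p) / u p)
    (heat : ∀ p, pt u p - (1/2) * px (px u) p = 0) :
    ∀ p, pt aHat p + aHat p * px aHat p - (1/2) * px (px aHat) p = 0 := by
  set v := px u with hv_def
  set w := px v with hw_def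
  set z := px w with hz_def
  have hv : ContDiff ℝ (⊤ : ℕ∞) v := contDiff_px u hu
  have hw : ContDiff ℝ (⊤ : ℕ∞) w := contDiff_px v hv
  have hz : ContDiff ℝ (⊤ : ℕ∞) z := contDiff_px w hw
  have ptu : ∀ q, pt u q = (1/2) * w q := by
    intro q; have := heat q; linarith
  have ptv : ∀ q, pt v q = (1/2) * z q := by
    intro q
    have h1 : pt v q = px (pt u) q := pt_px_comm u hu q
    have h2 : (fun y => pt u (q.1, y)) = fun y => (1/2) * w (q.1, y) := by
      funext y; exact ptu (q.1, y)
    have h3 : px (pt u) q = (1/2) * z q := by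
      have hd := ((hasDerivAt_px w hw q).const_mul (1/2 : ℝ)).deriv
      simp only [px] at hd ⊢
      rw [h2, hd]; rfl
    rw [h1, h3]
  have pxa : ∀ q, px aHat q = (v q * v q - w q * u q) / u q ^ 2 := by
    intro q
    have hder : HasDerivAt (fun y => aHat (q.1, y))
        ((-(w q) * u q - -(v q) * v q) / u q ^ 2) q.2 := by
      have h := ((hasDerivAt_px v hv q).neg).div (hasDerivAt_px u hu q) (hne q)
      have heq : (fun y => aHat (q.1, y)) = fun y => -(v (q.1, y)) / u (q.1, y) := by
        funext y; exact ha (q.1, y)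
      rw [heq]; exact h
    have hd := hder.deriv
    simp only [px]; rw [hd]; ring
  intro p
  have pta : pt aHat p = ((-(1/2 * z p)) * u p - -(v p) * (1/2 * w p)) / u p ^ 2 := by
    have hder : HasDerivAt (fun s => aHat (s, p.2))
        ((-(pt v p) * u p - -(v p) * (pt u p)) / u p ^ 2) p.1 := by
      have h := ((hasDerivAt_pt v hv p).neg).div (hasDerivAt_pt u hu p) (hne p)
      have heq : (fun s => aHat (s, p.2)) = fun s => -(v (s, p.2)) / u (s, p.2) := by
        funext s; exact ha (s, p.2)
      rw [heq]; exact h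
    have hd := hder.deriv
    simp only [pt]; rw [hd, ptv p, ptu p]
  have pxxa : px (px aHat) p =
      (((w p * v p + v p * w p) - (z p * u p + w p * v p)) * u p ^ 2
        - (v p * v p - w p * u p) * ((2 : ℕ) * u p ^ 1 * v p)) / (u p ^ 2) ^ 2 := by
    have hvq := hasDerivAt_px v hv p
    have hwq := hasDerivAt_px w hw p
    have huq := hasDerivAt_px u hu p
    rw [← hw_def] at hvq
    rw [← hz_def] at hwq
    rw [← hv_def] at huq
    have hnum := (hvq.mul hvq).sub (hwq.mul huq)
    have hden := huq.pow 2
    have hder := hnum.div hden (pow_ne_zero 2 (hne p))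
    have heq : (fun y => px aHat (p.1, y))
        = fun y => (v (p.1, y) * v (p.1, y) - w (p.1, y) * u (p.1, y)) / u (p.1, y) ^ 2 := by
      funext y; exact pxa (p.1, y)
    have hrfl : px (px aHat) p = deriv (fun y => px aHat (p.1, y)) p.2 := rfl
    rw [hrfl, heq]; exact hder.deriv
  rw [pta, pxa p, pxxa, ha p]
  have hp := hne p
  field_simp
  ring
end

section
/- Conversely, if V : ℝ × ℝ → ℂ satisfies the complex Burgers equation ∂t V + V ∂x V - (i/2) ∂xx V = 0 and V = -i (∂x F)/F for a smooth nowhere-zero F : ℝ × ℝ → ℂ, then ∂x [ (1/F)( i ∂t F + (1/2) ∂xx F ) ] = 0, i.e. F solves the free Schrödinger equation up to a function of time only. -/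
/-!
With `V = -i ∂ₓF / F` (Cole–Hopf), differentiating `V F = -i ∂ₓF` expresses `∂ₜV`, `∂ₓV`, `∂ₓ²V`
through derivatives of `F`, and clearing the denominator `F²` shows that the Burgers expression
`∂ₜV + V ∂ₓV - (i/2) ∂ₓ²V` is exactly `-∂ₓ[(i ∂ₜF + ½ ∂ₓ²F) / F]` once the mixed partials
`∂ₓ∂ₜF = ∂ₜ∂ₓF` are identified.
-/

/-- Partial derivative in the time (first) variable, for complex-valued `f`. -/
noncomputable def ptC (f : ℝ × ℝ → ℂ) (p : ℝ × ℝ) : ℂ :=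
  deriv (fun s => f (s, p.2)) p.1

/-- Partial derivative in the space (second) variable, for complex-valued `f`. -/
noncomputable def pxC (f : ℝ × ℝ → ℂ) (p : ℝ × ℝ) : ℂ :=
  deriv (fun y => f (p.1, y)) p.2

section PartialDerivatives

variable {f g : ℝ × ℝ → ℂ} {p : ℝ × ℝ}

theorem ptC_eq_fderiv (hf : DifferentiableAt ℝ f p) : ptC f p = fderiv ℝ f p (1, 0) :=
  (hf.hasFDerivAt.comp_hasDerivAt p.1 ((hasDerivAt_id _).prodMk (hasDerivAt_const _ _))).deriv

theorem pxC_eq_fderiv (hf : DifferentiableAt ℝ f p) : pxC f p = fderiv ℝ f p (0, 1) :=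
  (hf.hasFDerivAt.comp_hasDerivAt p.2 ((hasDerivAt_const _ _).prodMk (hasDerivAt_id _))).deriv

theorem contDiff_ptC {m n : WithTop ℕ∞} (hf : ContDiff ℝ n f) (hmn : m + 1 ≤ n) :
    ContDiff ℝ m (ptC f) := by
  have hd : Differentiable ℝ f := (hf.of_le (le_trans le_add_self hmn)).differentiable one_ne_zero
  rw [show ptC f = fun q => fderiv ℝ f q (1, 0) from funext fun q => ptC_eq_fderiv (hd q)]
  exact (hf.fderiv_right hmn).clm_apply contDiff_const

theorem contDiff_pxC {m n : WithTop ℕ∞} (hf : ContDiff ℝ n f) (hmn : m + 1 ≤ n) :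
    ContDiff ℝ m (pxC f) := by
  have hd : Differentiable ℝ f := (hf.of_le (le_trans le_add_self hmn)).differentiable one_ne_zero
  rw [show pxC f = fun q => fderiv ℝ f q (0, 1) from funext fun q => pxC_eq_fderiv (hd q)]
  exact (hf.fderiv_right hmn).clm_apply contDiff_const

theorem pxC_mul (hf : DifferentiableAt ℝ f p) (hg : DifferentiableAt ℝ g p) :
    pxC (fun q => f q * g q) p = pxC f p * g p + f p * pxC g p := by
  rw [pxC_eq_fderiv (hf.fun_mul hg), fderiv_fun_mul hf hg, pxC_eq_fderiv hf, pxC_eq_fderiv hg]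
  simp only [add_apply, smul_apply, smul_eq_mul]
  ring

theorem ptC_mul (hf : DifferentiableAt ℝ f p) (hg : DifferentiableAt ℝ g p) :
    ptC (fun q => f q * g q) p = ptC f p * g p + f p * ptC g p := by
  rw [ptC_eq_fderiv (hf.fun_mul hg), fderiv_fun_mul hf hg, ptC_eq_fderiv hf, ptC_eq_fderiv hg]
  simp only [add_apply, smul_apply, smul_eq_mul]
  ring

theorem pxC_const_mul (c : ℂ) (hf : DifferentiableAt ℝ f p) :
    pxC (fun q => c * f q) p = c * pxC f p := by
  rw [pxC_eq_fderiv (hf.const_mul c), fderiv_const_mul hf, pxC_eq_fderiv hf]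
  rfl

theorem ptC_const_mul (c : ℂ) (hf : DifferentiableAt ℝ f p) :
    ptC (fun q => c * f q) p = c * ptC f p := by
  rw [ptC_eq_fderiv (hf.const_mul c), fderiv_const_mul hf, ptC_eq_fderiv hf]
  rfl

theorem pxC_add (hf : DifferentiableAt ℝ f p) (hg : DifferentiableAt ℝ g p) :
    pxC (fun q => f q + g q) p = pxC f p + pxC g p := by
  rw [pxC_eq_fderiv (hf.fun_add hg), fderiv_fun_add hf hg, pxC_eq_fderiv hf, pxC_eq_fderiv hg]
  rfl

theorem pxC_ptC_comm (hf : ContDiff ℝ 2 f) (p : ℝ × ℝ) : pxC (ptC f) p = ptC (pxC f) p := by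
  have hd : Differentiable ℝ f := hf.differentiable (by norm_num)
  have hdd : DifferentiableAt ℝ (fderiv ℝ f) p :=
    (hf.fderiv_right (m := 1) (by norm_num)).differentiable one_ne_zero p
  have second (v w : ℝ × ℝ) :
      fderiv ℝ (fun q => fderiv ℝ f q v) p w = fderiv ℝ (fderiv ℝ f) p w v := by
    rw [fderiv_clm_apply hdd (differentiableAt_const v)]
    simp
  rw [show ptC f = fun q => fderiv ℝ f q (1, 0) from funext fun q => ptC_eq_fderiv (hd q),
    show pxC f = fun q => fderiv ℝ f q (0, 1) from funext fun q => pxC_eq_fderiv (hd q),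
    pxC_eq_fderiv (hdd.clm_apply (differentiableAt_const _)),
    ptC_eq_fderiv (hdd.clm_apply (differentiableAt_const _)), second, second]
  exact (hf.contDiffAt.isSymmSndFDerivAt (by simp)).eq _ _

theorem pxC_div (hf : DifferentiableAt ℝ f p) (hg : DifferentiableAt ℝ g p) (hgp : g p ≠ 0) :
    pxC (fun q => f q / g q) p = (pxC f p * g p - f p * pxC g p) / g p ^ 2 := by
  have hline {h : ℝ × ℝ → ℂ} (hh : DifferentiableAt ℝ h p) :
      DifferentiableAt ℝ (fun y => h (p.1, y)) p.2 :=
    hh.comp p.2 ((differentiableAt_const _).prodMk differentiableAt_id)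
  exact deriv_fun_div (hline hf) (hline hg) hgp

end PartialDerivatives

section ColeHopf

open Complex

theorem pxC_schrodinger_quotient {F : ℝ × ℝ → ℂ} (hF : ContDiff ℝ 3 F) {p : ℝ × ℝ}
    (hne : F p ≠ 0) :
    pxC (fun q => 1 / F q * (I * ptC F q + 1 / 2 * pxC (pxC F) q)) p =
      (F p * (I * pxC (ptC F) p + 1 / 2 * pxC (pxC (pxC F)) p)
        - pxC F p * (I * ptC F p + 1 / 2 * pxC (pxC F) p)) / F p ^ 2 := by
  have hFt : Differentiable ℝ (ptC F) :=
    (contDiff_ptC hF (m := 2) (by norm_num)).differentiable (by norm_num)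
  have hFxx : Differentiable ℝ (pxC (pxC F)) :=
    (contDiff_pxC (contDiff_pxC hF (m := 2) (by norm_num)) (m := 1) (by norm_num)).differentiable
      (by norm_num)
  rw [funext fun q => one_div_mul_eq_div (F q) (I * ptC F q + 1 / 2 * pxC (pxC F) q),
    pxC_div (((hFt p).const_mul _).fun_add ((hFxx p).const_mul _))
      (hF.differentiable (by norm_num) p) hne,
    pxC_add ((hFt p).const_mul _) ((hFxx p).const_mul _), pxC_const_mul _ (hFt p),
    pxC_const_mul _ (hFxx p)]
  ring

theorem burgers_of_cole_hopf {F V : ℝ × ℝ → ℂ} (hF : ContDiff ℝ 3 F) (hne : ∀ p, F p ≠ 0)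
    (hV : ∀ p, V p = -I * pxC F p / F p) (p : ℝ × ℝ) :
    ptC V p + V p * pxC V p - I / 2 * pxC (pxC V) p =
      -(F p * (I * ptC (pxC F) p + 1 / 2 * pxC (pxC (pxC F)) p)
        - pxC F p * (I * ptC F p + 1 / 2 * pxC (pxC F) p)) / F p ^ 2 := by
  have hFx : ContDiff ℝ 2 (pxC F) := contDiff_pxC hF (by norm_num)
  have hFd : Differentiable ℝ F := hF.differentiable (by norm_num)
  have hFxd : Differentiable ℝ (pxC F) := hFx.differentiable (by norm_num)
  have hFxxd : Differentiable ℝ (pxC (pxC F)) :=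
    (contDiff_pxC hFx (m := 1) (by norm_num)).differentiable (by norm_num)
  have hV2 : ContDiff ℝ 2 V := by
    simp only [funext hV, div_eq_mul_inv]
    exact (contDiff_const.mul hFx).mul ((hF.of_le (by norm_num)).inv hne)
  have hVd : Differentiable ℝ V := hV2.differentiable (by norm_num)
  have hVxd : Differentiable ℝ (pxC V) :=
    (contDiff_pxC hV2 (m := 1) (by norm_num)).differentiable (by norm_num)
  -- `V F = -i ∂ₓF`, differentiated once in `t` and once and twice in `x`
  have hVF (q : ℝ × ℝ) : V q * F q = -I * pxC F q := by rw [hV, div_mul_cancel₀ _ (hne q)]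
  have hVF_x (q : ℝ × ℝ) : pxC V q * F q + V q * pxC F q = -I * pxC (pxC F) q := by
    rw [← pxC_mul (hVd q) (hFd q), funext hVF, pxC_const_mul _ (hFxd q)]
  have hVF_t : ptC V p * F p + V p * ptC F p = -I * ptC (pxC F) p := by
    rw [← ptC_mul (hVd p) (hFd p), funext hVF, ptC_const_mul _ (hFxd p)]
  have hVF_xx : pxC (pxC V) p * F p + 2 * pxC V p * pxC F p + V p * pxC (pxC F) p =
      -I * pxC (pxC (pxC F)) p := by
    rw [← pxC_const_mul _ (hFxxd p), ← funext hVF_x,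
      pxC_add ((hVxd p).fun_mul (hFd p)) ((hVd p).fun_mul (hFxd p)),
      pxC_mul (hVxd p) (hFd p), pxC_mul (hVd p) (hFxd p)]
    ring
  rw [eq_div_iff (pow_ne_zero 2 (hne p))]
  linear_combination F p * (hVF_t + V p * hVF_x p - I / 2 * hVF_xx)
    - (ptC F p + V p * pxC F p + I / 2 * pxC (pxC F) p) * hVF p + I * pxC F p * hVF_x p
    + (F p * pxC (pxC (pxC F)) p - pxC (pxC F) p * pxC F p) / 2 * I_sq

end ColeHopf

/-- Converse Cole–Hopf: if `V = -i ∂x F / F` satisfies the complex Burgers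
equation `∂t V + V ∂x V - (i/2) ∂xx V = 0` for a smooth nowhere-zero `F`, then
`∂x [ (1/F)( i ∂t F + (1/2) ∂xx F ) ] = 0`. -/
theorem schrodinger_up_to_time_function_of_complex_burgers
    (F : ℝ × ℝ → ℂ) (hF : ContDiff ℝ 4 F) (hne : ∀ p, F p ≠ 0)
    (V : ℝ × ℝ → ℂ) (hV : ∀ p, V p = -Complex.I * pxC F p / F p)
    (burgers : ∀ p, ptC V p + V p * pxC V p - (Complex.I/2) * pxC (pxC V) p = 0) :
    ∀ p, pxC (fun q => (1 / F q) * (Complex.I * ptC F q + (1/2) * pxC (pxC F) q)) p = 0 := by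
  intro p
  have hF3 : ContDiff ℝ 3 F := hF.of_le (by norm_num)
  rw [pxC_schrodinger_quotient hF3 (hne p), pxC_ptC_comm (hF3.of_le (by norm_num)), ← neg_eq_zero,
    ← neg_div, ← burgers_of_cole_hopf hF3 hne hV p, burgers p]
end
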